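/- (Theorem 4.2, upper bound: breakdown by coplanar contamination without outliers or inliers.) Suppose u satisfies Condition 2.1 with constant K and ε_m = m/(n+m) > 1 − n(p−1)/((n−1)K). Let Y = (x_1, x_1, …, x_1) consist of m copies of the first data point x_1 of X. Then no M-estimate of scatter for the contaminated sample Z = X ∪ Y about t exists. -/

import Mathlib

/-!
Taking the trace of `V⁻¹` times the fixed-point equation gives `p N = Σᵢ ψ(sᵢ)` with
`N = n + m`, and every term is at most `K`. Evaluating the quadratic form of the same
equation at `V⁻¹ (x₁ - t)` and keeping only the `m + 1` copies of `x₁` shows that these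
copies together contribute at most `N`. Hence `(p - 1) N ≤ (n - 1) K`, which contradicts
the bound on `ε_m`.
-/

open Matrix Finset Filter

noncomputable section

/-- Condition 2.1 with constant `K`: `u` is nonnegative, non-increasing and continuous on
`(0,∞)`; `ψ(s) = s·u(s)` is non-decreasing, strictly increasing wherever `ψ(s) < K`,
and `K = sup_{s>0} ψ(s)` (in particular `ψ` is bounded); and `K > p`. -/
structure Cond21 (p : ℕ) (u : ℝ → ℝ) (K : ℝ) : Prop where
  nonneg : ∀ ⦃s : ℝ⦄, 0 < s → 0 ≤ u s
  antitone : ∀ ⦃s₁ s₂ : ℝ⦄, 0 < s₁ → s₁ ≤ s₂ → u s₂ ≤ u s₁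
  cont : ContinuousOn u (Set.Ioi 0)
  psi_mono : ∀ ⦃s₁ s₂ : ℝ⦄, 0 < s₁ → s₁ ≤ s₂ → s₁ * u s₁ ≤ s₂ * u s₂
  psi_strictMono : ∀ ⦃s₁ s₂ : ℝ⦄, 0 < s₁ → s₁ < s₂ → s₁ * u s₁ < K → s₁ * u s₁ < s₂ * u s₂
  psi_lub : IsLUB {y : ℝ | ∃ s : ℝ, 0 < s ∧ y = s * u s} K
  K_gt_p : (p : ℝ) < K

/-- `V` is an M-estimate of scatter for the list `z` about the center `t`:
`V` is positive definite (hence symmetric) and satisfies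
`V = (1/N) Σᵢ u(sᵢ) (zᵢ - t)(zᵢ - t)ᵀ` with `sᵢ = (zᵢ - t)ᵀ V⁻¹ (zᵢ - t)`,
the `i`-th summand being the zero matrix when `zᵢ = t`. -/
def IsScatterMEstimate {p N : ℕ} (u : ℝ → ℝ) (t : Fin p → ℝ)
    (z : Fin N → Fin p → ℝ) (V : Matrix (Fin p) (Fin p) ℝ) : Prop :=
  V.PosDef ∧
    V = (N : ℝ)⁻¹ • ∑ i : Fin N,
      if z i = t then (0 : Matrix (Fin p) (Fin p) ℝ)
      else u ((z i - t) ⬝ᵥ (V⁻¹ *ᵥ (z i - t))) • Matrix.vecMulVec (z i - t) (z i - t)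

/-- A list of points of `ℝᵖ` is in general position about `t` if any `p` of the
differences (point − t), taken with distinct indices, are linearly independent. -/
def GenPosAbout {p n : ℕ} (t : Fin p → ℝ) (x : Fin n → Fin p → ℝ) : Prop :=
  ∀ f : Fin p → Fin n, Function.Injective f →
    LinearIndependent ℝ (fun j : Fin p => x (f j) - t)

/-- Squared Euclidean distance from `t` to `z`. -/
def sqDist {p : ℕ} (t z : Fin p → ℝ) : ℝ := (z - t) ⬝ᵥ (z - t)

/-- The unit direction `θ(z) = (z - t)/‖z - t‖` (Euclidean norm). -/
def dirFrom {p : ℕ} (t z : Fin p → ℝ) : Fin p → ℝ :=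
  (Real.sqrt (sqDist t z))⁻¹ • (z - t)

/-- `Y ∈ C_{1,ρ,m}(X)`: for every choice of `p` points of `Z = X ∪ Y` with distinct
indices, all different from `t`, the smallest eigenvalue of `Σⱼ θ(z_{i(j)})θ(z_{i(j)})ᵀ`
exceeds `ρ`; this is expressed via the Rayleigh quotient characterization of the
smallest eigenvalue of a symmetric matrix. -/
def InC1 {p n m : ℕ} (ρ : ℝ) (t : Fin p → ℝ) (X : Fin n → Fin p → ℝ)
    (Y : Fin m → Fin p → ℝ) : Prop :=
  ∀ f : Fin p → Fin (n + m), Function.Injective f →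
    (∀ j, Fin.append X Y (f j) ≠ t) →
    ∀ v : Fin p → ℝ, v ⬝ᵥ v = 1 →
      ρ < v ⬝ᵥ ((∑ j : Fin p,
        Matrix.vecMulVec (dirFrom t (Fin.append X Y (f j)))
          (dirFrom t (Fin.append X Y (f j)))) *ᵥ v)

/-- `Y ∈ C_{2,r,m}(X)`: every contaminating point satisfies `‖yᵢ - t‖² > r`. -/
def InC2 {p m : ℕ} (r : ℝ) (t : Fin p → ℝ) (Y : Fin m → Fin p → ℝ) : Prop :=
  ∀ i : Fin m, r < sqDist t (Y i)

/-- `Y ∈ C_{3,B,m}(X)`: every contaminating point satisfies `‖yᵢ - t‖² < B`. -/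
def InC3 {p m : ℕ} (B : ℝ) (t : Fin p → ℝ) (Y : Fin m → Fin p → ℝ) : Prop :=
  ∀ i : Fin m, sqDist t (Y i) < B

namespace Matrix

variable {ι n R : Type*} [Fintype ι] [Fintype n] [CommRing R]

theorem trace_mul_sum_smul_vecMulVec (M : Matrix n n R) (c : ι → R) (d : ι → n → R) :
    trace (M * ∑ i, c i • vecMulVec (d i) (d i)) = ∑ i, c i * (d i ⬝ᵥ (M *ᵥ d i)) := by
  simp only [Matrix.mul_sum, Matrix.mul_smul, trace_sum, trace_smul, mul_vecMulVec,
    trace_vecMulVec, dotProduct_comm (M *ᵥ _), smul_eq_mul]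

theorem dotProduct_sum_smul_vecMulVec_mulVec (c : ι → R) (d : ι → n → R) (v : n → R) :
    v ⬝ᵥ ((∑ i, c i • vecMulVec (d i) (d i)) *ᵥ v) = ∑ i, c i * (d i ⬝ᵥ v) ^ 2 := by
  simp only [sum_mulVec, smul_mulVec, vecMulVec_mulVec, op_smul_eq_smul, sum_dotProduct,
    smul_dotProduct, smul_eq_mul, dotProduct_comm v]
  exact sum_congr rfl fun i _ => by ring

end Matrix

section MEstimate

variable {p N : ℕ} {u : ℝ → ℝ} {K : ℝ} {t y : Fin p → ℝ} {z : Fin N → Fin p → ℝ}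
  {V : Matrix (Fin p) (Fin p) ℝ}

def mahalanobisSq (V : Matrix (Fin p) (Fin p) ℝ) (t y : Fin p → ℝ) : ℝ :=
  (y - t) ⬝ᵥ (V⁻¹ *ᵥ (y - t))

/-- The weight `u(sᵢ)` of a sample point `y` in the fixed-point equation of
`IsScatterMEstimate`. -/
def scatterWeight (u : ℝ → ℝ) (V : Matrix (Fin p) (Fin p) ℝ) (t y : Fin p → ℝ) : ℝ :=
  if y = t then 0 else u (mahalanobisSq V t y)

theorem mahalanobisSq_pos (hV : V.PosDef) (hy : y ≠ t) : 0 < mahalanobisSq V t y := by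
  have h := hV.inv.dotProduct_mulVec_pos (sub_ne_zero.2 hy)
  rwa [star_trivial] at h

theorem scatterWeight_nonneg (hu : ∀ ⦃s : ℝ⦄, 0 < s → 0 ≤ u s) (hV : V.PosDef)
    (y : Fin p → ℝ) : 0 ≤ scatterWeight u V t y := by
  unfold scatterWeight
  split_ifs with hy
  · exact le_rfl
  · exact hu (mahalanobisSq_pos hV hy)

theorem scatterWeight_mul_mahalanobisSq_le (hu : ∀ ⦃s : ℝ⦄, 0 < s → 0 ≤ u s)
    (hψ : ∀ ⦃s : ℝ⦄, 0 < s → s * u s ≤ K) (hV : V.PosDef) (y : Fin p → ℝ) :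
    scatterWeight u V t y * mahalanobisSq V t y ≤ K := by
  unfold scatterWeight
  split_ifs with hy
  · simpa using (hu one_pos).trans (by simpa using hψ one_pos)
  · rw [mul_comm]
    exact hψ (mahalanobisSq_pos hV hy)

namespace IsScatterMEstimate

theorem natCast_smul_eq_sum (hV : IsScatterMEstimate u t z V) :
    (N : ℝ) • V = ∑ i, scatterWeight u V t (z i) • vecMulVec (z i - t) (z i - t) := by
  rcases N.eq_zero_or_pos with rfl | hN
  · simp
  conv_lhs => rw [hV.2, smul_smul, mul_inv_cancel₀ (by positivity), one_smul]
  refine sum_congr rfl fun i _ => ?_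
  unfold scatterWeight
  split_ifs <;> simp [mahalanobisSq]

theorem mul_card_eq_sum (hV : IsScatterMEstimate u t z V) :
    (p : ℝ) * N = ∑ i, scatterWeight u V t (z i) * mahalanobisSq V t (z i) := by
  have hdet : IsUnit V.det := isUnit_iff_ne_zero.2 hV.1.det_pos.ne'
  calc (p : ℝ) * N = trace (V⁻¹ * ((N : ℝ) • V)) := by
        rw [Matrix.mul_smul, trace_smul, nonsing_inv_mul _ hdet, trace_one, Fintype.card_fin,
          smul_eq_mul, mul_comm]
    _ = _ := by rw [hV.natCast_smul_eq_sum, trace_mul_sum_smul_vecMulVec]; rfl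

theorem card_mul_le (hu : ∀ ⦃s : ℝ⦄, 0 < s → 0 ≤ u s) (hV : IsScatterMEstimate u t z V)
    {s : Finset (Fin N)} (hs : ∀ i ∈ s, z i = y) :
    #s * (scatterWeight u V t y * mahalanobisSq V t y) ≤ N := by
  by_cases hy : y = t
  · simp [scatterWeight, hy]
  have hdet : IsUnit V.det := isUnit_iff_ne_zero.2 hV.1.det_pos.ne'
  set a := mahalanobisSq V t y
  set v := V⁻¹ *ᵥ (y - t)
  have ha : 0 < a := mahalanobisSq_pos hV.1 hy
  have hquad : N * a = ∑ i, scatterWeight u V t (z i) * ((z i - t) ⬝ᵥ v) ^ 2 := by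
    calc N * a = v ⬝ᵥ (((N : ℝ) • V) *ᵥ v) := by
          rw [smul_mulVec, dotProduct_smul, mulVec_mulVec, mul_nonsing_inv _ hdet, one_mulVec,
            dotProduct_comm, smul_eq_mul]
          rfl
      _ = _ := by rw [hV.natCast_smul_eq_sum, dotProduct_sum_smul_vecMulVec_mulVec]
  have hcopies : #s * (scatterWeight u V t y * a ^ 2) ≤ N * a := by
    rw [hquad]
    calc _ = ∑ i ∈ s, scatterWeight u V t (z i) * ((z i - t) ⬝ᵥ v) ^ 2 := by
          rw [sum_congr rfl fun i hi => by rw [hs i hi], sum_const, nsmul_eq_mul]; rfl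
      _ ≤ _ := sum_le_sum_of_subset_of_nonneg (subset_univ s) fun i _ _ =>
          mul_nonneg (scatterWeight_nonneg hu hV.1 _) (sq_nonneg _)
  refine le_of_mul_le_mul_right ?_ ha
  linarith

theorem sub_one_mul_le (hu : ∀ ⦃s : ℝ⦄, 0 < s → 0 ≤ u s) (hψ : ∀ ⦃s : ℝ⦄, 0 < s → s * u s ≤ K)
    (hV : IsScatterMEstimate u t z V) {s : Finset (Fin N)} (hs : ∀ i ∈ s, z i = y) :
    ((p : ℝ) - 1) * N ≤ (N - #s) * K := by
  set ψ := fun x => scatterWeight u V t x * mahalanobisSq V t x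
  have hcopies : ∑ i ∈ s, ψ (z i) = #s * ψ y := by
    rw [sum_congr rfl fun i hi => by rw [hs i hi], sum_const, nsmul_eq_mul]
  have hrest : ∑ i ∈ sᶜ, ψ (z i) ≤ (N - #s) * K := by
    calc _ ≤ #sᶜ • K :=
          sum_le_card_nsmul _ _ _ fun i _ => scatterWeight_mul_mahalanobisSq_le hu hψ hV.1 _
      _ = _ := by
          have hsN : #s ≤ N := by simpa using card_le_univ s
          rw [card_compl, nsmul_eq_mul, Fintype.card_fin, Nat.cast_sub hsN]
  have htrace := hV.mul_card_eq_sum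
  rw [← sum_add_sum_compl s] at htrace
  have := hV.card_mul_le hu hs
  linarith

end IsScatterMEstimate

end MEstimate

theorem exists_card_eq_succ_forall_append_const_eq {α : Type*} {n m : ℕ} (X : Fin n → α)
    (i₀ : Fin n) : ∃ s : Finset (Fin (n + m)),
      #s = m + 1 ∧ ∀ i ∈ s, Fin.append X (fun _ : Fin m => X i₀) i = X i₀ := by
  refine ⟨cons (Fin.castAdd m i₀) (univ.map (Fin.natAddEmb n)) ?_, ?_, ?_⟩
  · simp [Fin.ext_iff]
    omega
  · rw [card_cons, card_map, card_univ, Fintype.card_fin]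
  · intro i hi
    rw [cons_eq_insert, mem_insert, Finset.mem_map] at hi
    rcases hi with rfl | ⟨j, -, rfl⟩
    · exact Fin.append_left _ _ i₀
    · exact Fin.append_right _ _ j

theorem div_add_le_one_sub_div_of_mul_le {n m q K : ℝ} (hn : 1 ≤ n) (hm : 0 ≤ m) (hK : 0 ≤ K)
    (h : q * (n + m) ≤ (n - 1) * K) : m / (n + m) ≤ 1 - n * q / ((n - 1) * K) := by
  have hnm : 0 < n + m := by linarith
  have hcompl : 1 - n / (n + m) = m / (n + m) := by field_simp; ring
  rcases (mul_nonneg (sub_nonneg.2 hn) hK).eq_or_lt with h0 | hpos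
  · rw [← h0, div_zero, sub_zero, div_le_one hnm]
    linarith
  · have : n * q / ((n - 1) * K) ≤ n / (n + m) := by
      rw [div_le_div_iff₀ hpos hnm]
      nlinarith
    linarith

theorem statement17_general (p n m : ℕ) (hn : p * (p - 1) < n)
    (t : Fin p → ℝ) (u : ℝ → ℝ) (K : ℝ) (hu : Cond21 p u K)
    (X : Fin n → Fin p → ℝ)
    (heps : 1 - (n : ℝ) * ((p : ℝ) - 1) / (((n : ℝ) - 1) * K)
      < (m : ℝ) / ((n : ℝ) + m)) :
    ¬ ∃ V : Matrix (Fin p) (Fin p) ℝ,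
      IsScatterMEstimate u t
        (Fin.append X (fun _ : Fin m => X ⟨0, Nat.lt_of_le_of_lt (Nat.zero_le _) hn⟩))
        V := by
  rintro ⟨V, hV⟩
  have hn₀ : 0 < n := Nat.lt_of_le_of_lt (Nat.zero_le _) hn
  obtain ⟨s, hcard, hs⟩ := exists_card_eq_succ_forall_append_const_eq (m := m) X ⟨0, hn₀⟩
  have hbound := hV.sub_one_mul_le hu.nonneg (fun s hs => hu.psi_lub.1 ⟨s, hs, rfl⟩) hs
  rw [hcard] at hbound
  push_cast at hbound
  exact heps.not_ge (div_add_le_one_sub_div_of_mul_le (by exact_mod_cast hn₀) m.cast_nonneg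
    (p.cast_nonneg.trans hu.K_gt_p.le) (by linarith))

/-- Theorem 4.2 (upper bound: breakdown by coplanar contamination without outliers or
inliers): if `ε_m = m/(n+m) > 1 - n(p-1)/((n-1)K)` and `Y` consists of `m` copies of
the first data point `x₁` of `X`, then no M-estimate of scatter for `Z = X ∪ Y` about
`t` exists. -/
theorem statement17 (p n m : ℕ) (hp : 2 ≤ p) (hm : 1 ≤ m) (hn : p * (p - 1) < n)
    (t : Fin p → ℝ) (u : ℝ → ℝ) (K : ℝ) (hu : Cond21 p u K)
    (X : Fin n → Fin p → ℝ) (hX : GenPosAbout t X)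
    (heps : 1 - (n : ℝ) * ((p : ℝ) - 1) / (((n : ℝ) - 1) * K)
      < (m : ℝ) / ((n : ℝ) + m)) :
    ¬ ∃ V : Matrix (Fin p) (Fin p) ℝ,
      IsScatterMEstimate u t
        (Fin.append X (fun _ : Fin m => X ⟨0, Nat.lt_of_le_of_lt (Nat.zero_le _) hn⟩))
        V :=
  statement17_general p n m hn t u K hu X heps
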